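/- Let e₁, …, eₙ be an orthogonal basis of V with respect to the quadratic form q. Then the set of products e_I = e_{i₁} ⋯ e_{i_k} over all subsets I = {i₁ < ⋯ < i_k} ⊆ {1,…,n} forms a basis of the Clifford algebra Cl(V,q), and in particular these 2^n elements are linearly independent. -/

import Mathlib

/-!
In characteristic not two, `CliffordAlgebra.equivExterior` identifies `Cl(V, q)` with the
exterior algebra as a module, by Bourbaki's change of form along the polar bilinear form. That
change of form alters a product of vectors only by contraction terms, and these vanish on a
product of mutually orthogonal vectors. Hence it sends `e_I` to `e_{i₁} ∧ ⋯ ∧ e_{i_k}`, and these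
wedges form the standard basis of the exterior algebra.
-/

namespace CliffordAlgebra

variable {R M : Type*} [CommRing R] [AddCommGroup M] [Module R M] {Q Q' : QuadraticForm R M}

theorem contractLeft_prod_map_ι_of_forall_eq_zero (d : Module.Dual R M) {l : List M}
    (hl : ∀ m ∈ l, d m = 0) : contractLeft d (l.map (ι Q)).prod = 0 := by
  induction l with
  | nil => simp
  | cons m t ih =>
    rw [List.forall_mem_cons] at hl
    simp [contractLeft_ι_mul, hl.1, ih hl.2]

theorem changeForm_prod_map_ι {B : LinearMap.BilinForm R M} (h : B.toQuadraticMap = Q' - Q)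
    {l : List M} (hl : l.Pairwise fun m m' => B m m' = 0) :
    changeForm h (l.map (ι Q)).prod = (l.map (ι Q')).prod := by
  induction l with
  | nil => simp
  | cons m t ih =>
    rw [List.pairwise_cons] at hl
    rw [List.map_cons, List.prod_cons, changeForm_ι_mul, ih hl.2,
      contractLeft_prod_map_ι_of_forall_eq_zero _ hl.1, sub_zero, List.map_cons, List.prod_cons]

end CliffordAlgebra

namespace ExteriorAlgebra

variable {R M I : Type*} [CommRing R] [AddCommGroup M] [Module R M] [LinearOrder I]

theorem basis_apply_eq_prod_sort (b : Module.Basis I R M) (s : Finset I) :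
    b.ExteriorAlgebra s = ((s.sort (· ≤ ·)).map fun i => ι R (b i)).prod := by
  rw [basis_apply_ofCard b rfl, ιMulti_family, ιMulti_apply,
    List.ofFn_eq_map, ← Finset.listMap_orderEmbOfFin_finRange s rfl, List.map_map]
  rfl

end ExteriorAlgebra

namespace Module.Basis

variable {R M I : Type*} [CommRing R] [AddCommGroup M] [Module R M] [LinearOrder I]
  [Invertible (2 : R)]

noncomputable def cliffordAlgebra (Q : QuadraticForm R M) (b : Basis I R M) :
    Basis (Finset I) R (CliffordAlgebra Q) :=
  b.ExteriorAlgebra.map (CliffordAlgebra.equivExterior Q).symm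

theorem cliffordAlgebra_apply_of_isOrthoᵢ {Q : QuadraticForm R M} {b : Basis I R M}
    (hb : (QuadraticMap.associated Q).IsOrthoᵢ b) (s : Finset I) :
    b.cliffordAlgebra Q s = ((s.sort (· ≤ ·)).map fun i => CliffordAlgebra.ι Q (b i)).prod := by
  have horth : ((s.sort (· ≤ ·)).map b).Pairwise
      fun m m' => QuadraticMap.associated (-Q) m m' = 0 := by
    refine List.pairwise_map.2 ((Finset.sortedLT_sort s).pairwise.imp fun hij => ?_)
    simp [hb hij.ne]
  rw [cliffordAlgebra, map_apply, LinearEquiv.symm_apply_eq,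
    ExteriorAlgebra.basis_apply_eq_prod_sort, CliffordAlgebra.equivExterior,
    CliffordAlgebra.changeFormEquiv_apply]
  simpa only [List.map_map, Function.comp_def] using
    (CliffordAlgebra.changeForm_prod_map_ι _ horth).symm

end Module.Basis

/-- Let `e₁, …, eₙ` be an orthogonal basis of `V` (i.e. the associated bilinear form
`b(eᵢ,eⱼ) = (q(eᵢ+eⱼ) − q(eᵢ) − q(eⱼ))/2` vanishes for `i ≠ j`).  Then the family of
products `e_I = e_{i₁} ⋯ e_{i_k}` indexed by subsets `I = {i₁ < ⋯ < i_k} ⊆ {1,…,n}`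
forms a basis of the Clifford algebra `Cl(V,q)`: the `2^n` elements are linearly
independent and they span the whole algebra. -/
theorem clifford_orthogonal_basis_products_basis
    {F V : Type*} [Field F] [AddCommGroup V] [Module F V]
    (h2 : (2 : F) ≠ 0) (q : QuadraticForm F V) {n : ℕ} (e : Module.Basis (Fin n) F V)
    (horth : ∀ i j : Fin n, i ≠ j → (q (e i + e j) - q (e i) - q (e j)) / 2 = 0) :
    LinearIndependent F
        (fun I : Finset (Fin n) =>
          ((I.sort (· ≤ ·)).map (fun i => CliffordAlgebra.ι q (e i))).prod) ∧
      Submodule.span F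
        (Set.range (fun I : Finset (Fin n) =>
          ((I.sort (· ≤ ·)).map (fun i => CliffordAlgebra.ι q (e i))).prod)) = ⊤ := by
  let := invertibleOfNonzero h2
  have he : (QuadraticMap.associated q).IsOrthoᵢ e := fun i j hij => by
    change QuadraticMap.associated q (e i) (e j) = 0
    simpa [QuadraticMap.associated_apply, div_eq_inv_mul] using horth i j hij
  have hbasis : ⇑(e.cliffordAlgebra q) =
      fun I => ((I.sort (· ≤ ·)).map (fun i => CliffordAlgebra.ι q (e i))).prod :=
    funext (Module.Basis.cliffordAlgebra_apply_of_isOrthoᵢ he)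
  rw [← hbasis]
  exact ⟨(e.cliffordAlgebra q).linearIndependent, (e.cliffordAlgebra q).span_eq⟩
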